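/- Let Ω ⊆ ℝⁿ be an open set, F : Ω → ℝⁿ a continuous vector field and V : Ω → ℝ continuous. The following are equivalent: (i) V is both a viscosity subsolution of −F(x)·∇V(x) ≤ 0 and a viscosity supersolution of F(x)·∇V(x) ≥ 0 in Ω; (ii) the pair (V,F) is weakly increasing, i.e. for every x₀ ∈ Ω there exist ε > 0 and a C¹ curve x : (−ε,ε) → Ω with x(0) = x₀, ẋ(t) = F(x(t)) for all t ∈ (−ε,ε), and V(x(s)) ≤ V(x(t)) whenever −ε < s ≤ t < ε. -/

import Mathlib

/-!
(⇐) If `V - φ` has a local maximum at `x₀` and `V` is nondecreasing along a trajectory `x`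
through `x₀`, then `φ ∘ x` has a one-sided local minimum at `0`, so `⟪F x₀, ∇φ x₀⟫ ≥ 0`. The
supersolution property is the same statement for `(-F, -V)`, i.e. for the trajectory in
reversed time.

(⇒) Reversing time in the same way, it suffices to build forward trajectories along which `V`
is nondecreasing. They are limits of Euler polygons for the feedback field `x ↦ F (Y x)`, where
`Y x` maximizes `V y - ‖y - x‖² / 2a`. Testing the subsolution property with
`φ = ‖· - x‖² / 2a` gives `⟪F (Y x), Y x - x⟫ ≥ 0`, so an Euler step of size `h` lowers the
sup-convolution `V (Y x) - ‖Y x - x‖² / 2a` by at most `h² M² / 2a`. As the sup-convolution lies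
between `V` and `V ∘ Y` and `Y x` is close to `x`, `V` is almost nondecreasing along the polygons.
A pointwise cluster point of the polygons (Tychonoff) is a trajectory, because the slopes of the
polygons are values of `F` at nearby points.
-/

open Set Filter Topology Metric
open scoped RealInnerProductSpace

variable {E : Type*} [NormedAddCommGroup E]

theorem mem_Ico_floor_div_mul {h t : ℝ} (hh : 0 < h) (ht : 0 ≤ t) :
    t ∈ Ico (⌊t / h⌋₊ * h) ((⌊t / h⌋₊ + 1) * h) := by
  rw [mem_Ico, ← le_div_iff₀ hh, ← div_lt_iff₀ hh]
  exact ⟨Nat.floor_le (div_nonneg ht hh.le), Nat.lt_floor_add_one _⟩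

theorem le_add_mul_of_forall_sub_le_succ {f : ℕ → ℝ} {N : ℕ} {e : ℝ} (he : 0 ≤ e)
    (hf : ∀ k < N, f k - e ≤ f (k + 1)) {k l : ℕ} (hkl : k ≤ l) (hl : l ≤ N) :
    f k ≤ f l + l * e := by
  have hmono : MonotoneOn (fun k : ℕ => f k + k * e) (Iic N) :=
    monotoneOn_of_le_succ ordConnected_Iic fun k _ _ hk => by
      rw [Order.succ_eq_add_one] at hk ⊢
      have := hf k hk
      push_cast
      linarith
  have := hmono (hkl.trans hl) hl hkl
  have : (0 : ℝ) ≤ k * e := by positivity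
  simp only at *
  linarith

theorem exists_forall_frequently_dist_lt {α X : Type*} [PseudoMetricSpace X] {l : Filter α}
    [l.NeBot] {K : Set X} (hK : IsCompact K) {I : Set ℝ} {P : α → ℝ → X}
    (hP : ∀ j, MapsTo (P j) I K) :
    ∃ x : ℝ → X, MapsTo x I K ∧ ∀ s ∈ I, ∀ t ∈ I, ∀ η > 0,
      ∃ᶠ j in l, dist (P j s) (x s) < η ∧ dist (P j t) (x t) < η := by
  obtain ⟨q, hqK, hq⟩ := (isCompact_univ_pi fun _ : I => hK).exists_mapClusterPt
    (u := fun j (i : I) => P j i) (f := l)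
    (tendsto_principal.2 (Eventually.of_forall fun j i _ => hP j i.2))
  classical
  refine ⟨fun t => if ht : t ∈ I then q ⟨t, ht⟩ else P (nonempty_of_neBot l).some t,
    fun t ht => by simpa [ht] using hqK ⟨t, ht⟩ (mem_univ _), fun s hs t ht η hη => ?_⟩
  have hcont : Continuous fun f : I → X => (f ⟨s, hs⟩, f ⟨t, ht⟩) := by fun_prop
  have := mapClusterPt_iff_frequently.1 (hq.continuousAt_comp hcont.continuousAt) _
    (prod_mem_nhds (ball_mem_nhds _ hη) (ball_mem_nhds _ hη))
  simpa [hs, ht] using this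

theorem norm_sub_sq_le_of_isMaxOn_penalized {W : E → ℝ} {K : Set E} {a B : ℝ} {x y : E}
    (ha : 0 < a) (hy : IsMaxOn (fun z => W z - ‖z - x‖ ^ 2 / (2 * a)) K y) (hx : x ∈ K)
    (hyK : y ∈ K) (hB : ∀ z ∈ K, |W z| ≤ B) : ‖y - x‖ ^ 2 ≤ 4 * a * B := by
  have h1 : W x ≤ W y - ‖y - x‖ ^ 2 / (2 * a) := by simpa using hy hx
  have h2 := abs_le.1 (hB x hx)
  have h3 := abs_le.1 (hB y hyK)
  have h4 : ‖y - x‖ ^ 2 / (2 * a) ≤ 2 * B := by linarith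
  rw [div_le_iff₀ (by positivity)] at h4
  linarith

section NormedSpace

variable [NormedSpace ℝ E]

section EulerPolygon

variable {h : ℝ} {X v : ℕ → E}

noncomputable def eulerPolygon (h : ℝ) (X v : ℕ → E) (t : ℝ) : E :=
  X ⌊t / h⌋₊ + (t - ⌊t / h⌋₊ * h) • v ⌊t / h⌋₊

theorem eulerPolygon_natCast_mul (hh : 0 < h) (k : ℕ) : eulerPolygon h X v (k * h) = X k := by
  simp [eulerPolygon, hh.ne']

theorem eulerPolygon_eq (hh : 0 < h) (hX : ∀ k, X (k + 1) = X k + h • v k) {k : ℕ} {t : ℝ}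
    (ht : t ∈ Icc (k * h) ((k + 1) * h)) : eulerPolygon h X v t = X k + (t - k * h) • v k := by
  rcases ht.2.lt_or_eq with hlt | rfl
  · have : ⌊t / h⌋₊ = k := by
      rw [Nat.floor_eq_iff (div_nonneg ((by positivity : (0 : ℝ) ≤ k * h).trans ht.1) hh.le),
        le_div_iff₀ hh, div_lt_iff₀ hh]
      exact ⟨ht.1, hlt⟩
    simp [eulerPolygon, this]
  · rw [← Nat.cast_succ, eulerPolygon_natCast_mul hh, hX, Nat.cast_succ]
    module

theorem eulerPolygon_sub_eq (hh : 0 < h) (hX : ∀ k, X (k + 1) = X k + h • v k) {k : ℕ}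
    {s t : ℝ} (hs : s ∈ Icc (k * h) ((k + 1) * h)) (ht : t ∈ Icc (k * h) ((k + 1) * h)) :
    eulerPolygon h X v t - eulerPolygon h X v s = (t - s) • v k := by
  rw [eulerPolygon_eq hh hX ht, eulerPolygon_eq hh hX hs]
  module

theorem norm_eulerPolygon_sub_sub_smul_le (hh : 0 < h) (hX : ∀ k, X (k + 1) = X k + h • v k)
    {s t c : ℝ} {z : E} (hs : 0 ≤ s) (hst : s ≤ t) (hv : ∀ u ∈ Icc s t, ‖v ⌊u / h⌋₊ - z‖ ≤ c) :
    ‖eulerPolygon h X v t - eulerPolygon h X v s - (t - s) • z‖ ≤ c * (t - s) := by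
  -- split `[s, t]` at the first grid point after `s`
  induction hm : ⌊t / h⌋₊ - ⌊s / h⌋₊ generalizing s with
  | zero =>
    have hs' := mem_Ico_floor_div_mul hh hs
    have ht' : t < (⌊s / h⌋₊ + 1) * h := by
      have hfl : ⌊t / h⌋₊ = ⌊s / h⌋₊ :=
        le_antisymm (by omega) (Nat.floor_le_floor (by gcongr))
      simpa [hfl] using (mem_Ico_floor_div_mul hh (hs.trans hst)).2
    rw [eulerPolygon_sub_eq hh hX ⟨hs'.1, hs'.2.le⟩ ⟨hs'.1.trans hst, ht'.le⟩, ← smul_sub,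
      norm_smul, Real.norm_of_nonneg (sub_nonneg.2 hst), mul_comm]
    exact mul_le_mul_of_nonneg_right (hv s ⟨le_rfl, hst⟩) (sub_nonneg.2 hst)
  | succ m ih =>
    set k := ⌊s / h⌋₊
    set mid : ℝ := (k + 1) * h
    have hs' := mem_Ico_floor_div_mul hh hs
    have hmidt : mid ≤ t := by
      have : k + 1 ≤ ⌊t / h⌋₊ := by omega
      calc mid ≤ ⌊t / h⌋₊ * h := mul_le_mul_of_nonneg_right (by exact_mod_cast this) hh.le
        _ ≤ t := (mem_Ico_floor_div_mul hh (hs.trans hst)).1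
    have hmid : ⌊mid / h⌋₊ = k + 1 := by
      rw [show mid / h = ((k + 1 : ℕ) : ℝ) by push_cast; field_simp [mid]; ring, Nat.floor_natCast]
    have hsmid : s ≤ mid := hs'.2.le
    have hrest := ih (hs.trans hsmid) hmidt (fun u hu => hv u ⟨hsmid.trans hu.1, hu.2⟩)
      (by omega)
    have hfirst : eulerPolygon h X v mid - eulerPolygon h X v s = (mid - s) • v k :=
      eulerPolygon_sub_eq hh hX ⟨hs'.1, hsmid⟩ ⟨hs'.1.trans hsmid, le_rfl⟩
    calc ‖eulerPolygon h X v t - eulerPolygon h X v s - (t - s) • z‖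
        = ‖(eulerPolygon h X v t - eulerPolygon h X v mid - (t - mid) • z)
            + (mid - s) • (v k - z)‖ := by rw [smul_sub, ← hfirst]; congr 1; module
      _ ≤ c * (t - mid) + (mid - s) * c := by
          refine (norm_add_le _ _).trans (add_le_add hrest ?_)
          rw [norm_smul, Real.norm_of_nonneg (sub_nonneg.2 hsmid)]
          exact mul_le_mul_of_nonneg_left (hv s ⟨le_rfl, hst⟩) (sub_nonneg.2 hsmid)
      _ = c * (t - s) := by ring

theorem norm_eulerPolygon_sub_floor_le {M : ℝ} (hh : 0 < h)
    (hX : ∀ k, X (k + 1) = X k + h • v k) (hv : ∀ k, ‖v k‖ ≤ M) {t : ℝ} (ht : 0 ≤ t) :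
    ‖eulerPolygon h X v t - X ⌊t / h⌋₊‖ ≤ h * M := by
  have ht' := mem_Ico_floor_div_mul hh ht
  rw [eulerPolygon_eq hh hX ⟨ht'.1, ht'.2.le⟩, add_sub_cancel_left, norm_smul,
    Real.norm_of_nonneg (by linarith [ht'.1])]
  exact mul_le_mul (by linarith [ht'.2]) (hv _) (norm_nonneg _) hh.le

theorem norm_eulerPolygon_sub_zero_le {M : ℝ} (hh : 0 < h)
    (hX : ∀ k, X (k + 1) = X k + h • v k) (hv : ∀ k, ‖v k‖ ≤ M) {t : ℝ} (ht : 0 ≤ t) :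
    ‖eulerPolygon h X v t - X 0‖ ≤ M * t := by
  have h0 : eulerPolygon h X v 0 = X 0 := by
    simpa using eulerPolygon_natCast_mul hh (X := X) (v := v) 0
  rw [← h0]
  simpa using norm_eulerPolygon_sub_sub_smul_le hh hX le_rfl ht (z := 0) (c := M)
    fun u _ => by simpa using hv _

end EulerPolygon

def HasMonotoneForwardTrajectory (Ω : Set E) (F : E → E) (V : E → ℝ) (x₀ : E) : Prop :=
  ∃ ε > 0, ∃ x : ℝ → E, x 0 = x₀ ∧ MapsTo x (Ico 0 ε) Ω ∧
    (∀ t ∈ Ico 0 ε, HasDerivWithinAt x (F (x t)) (Ici 0) t) ∧ MonotoneOn (V ∘ x) (Ico 0 ε)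

theorem hasMonotoneForwardTrajectory_of_exists {Ω : Set E} {F : E → E} {V : E → ℝ} {x₀ : E}
    (h : ∃ ε > (0 : ℝ), ∃ x : ℝ → E, x 0 = x₀ ∧ (∀ t ∈ Ioo (-ε) ε, x t ∈ Ω) ∧
      (∀ t ∈ Ioo (-ε) ε, HasDerivWithinAt x (F (x t)) (Ioo (-ε) ε) t) ∧
      ∀ s t : ℝ, -ε < s → s ≤ t → t < ε → V (x s) ≤ V (x t)) :
    HasMonotoneForwardTrajectory Ω F V x₀ ∧ HasMonotoneForwardTrajectory Ω (-F) (-V) x₀ := by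
  obtain ⟨ε, hε, x, hx0, hxΩ, hx, hmono⟩ := h
  have hderiv : ∀ t ∈ Ioo (-ε) ε, HasDerivAt x (F (x t)) t := fun t ht =>
    (hx t ht).hasDerivAt (isOpen_Ioo.mem_nhds ht)
  refine ⟨⟨ε, hε, x, hx0, fun t ht => hxΩ t ⟨by linarith [ht.1], ht.2⟩,
    fun t ht => (hderiv t ⟨by linarith [ht.1], ht.2⟩).hasDerivWithinAt,
    fun s hs t ht hst => hmono s t (by linarith [hs.1]) hst ht.2⟩,
    ⟨ε, hε, fun t => x (-t), by simpa using hx0,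
      fun t ht => hxΩ _ ⟨by linarith [ht.2], by linarith [ht.1]⟩, fun t ht => ?_,
      fun s hs t ht hst => ?_⟩⟩
  · have := (hderiv (-t) ⟨by linarith [ht.2], by linarith [ht.1]⟩).scomp t (hasDerivAt_neg t)
    rw [neg_one_smul] at this
    exact this.hasDerivWithinAt
  · simpa using hmono (-t) (-s) (by linarith [ht.2]) (by linarith) (by linarith [hs.1])

theorem HasMonotoneForwardTrajectory.exists_backward {Ω : Set E} {F : E → E} {V : E → ℝ}
    {x₀ : E} (h : HasMonotoneForwardTrajectory Ω (-F) (-V) x₀) :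
    ∃ ε > 0, ∃ y : ℝ → E, y 0 = x₀ ∧ MapsTo y (Ioc (-ε) 0) Ω ∧
      (∀ t ∈ Ioc (-ε) 0, HasDerivWithinAt y (F (y t)) (Iic 0) t) ∧
      MonotoneOn (V ∘ y) (Ioc (-ε) 0) := by
  obtain ⟨ε, hε, z, hz0, hzΩ, hz, hzmono⟩ := h
  have hneg : ∀ t ∈ Ioc (-ε) 0, -t ∈ Ico 0 ε := fun t ht =>
    ⟨by linarith [ht.2], by linarith [ht.1]⟩
  refine ⟨ε, hε, fun t => z (-t), by simpa using hz0, fun t ht => hzΩ (hneg t ht),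
    fun t ht => ?_, fun s hs t ht hst => ?_⟩
  · have := (hz (-t) (hneg t ht)).scomp t ((hasDerivAt_neg t).hasDerivWithinAt (s := Iic 0))
      fun u hu => neg_nonneg.2 (mem_Iic.1 hu)
    rwa [Pi.neg_apply, neg_one_smul, neg_neg] at this
  · simpa using hzmono (hneg t ht) (hneg s hs) (by linarith)

theorem exists_monotone_trajectory_of_forward_backward {Ω : Set E} {F : E → E} {V : E → ℝ}
    {x₀ : E} (hf : HasMonotoneForwardTrajectory Ω F V x₀)
    (hb : HasMonotoneForwardTrajectory Ω (-F) (-V) x₀) :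
    ∃ ε > (0 : ℝ), ∃ x : ℝ → E, x 0 = x₀ ∧ (∀ t ∈ Ioo (-ε) ε, x t ∈ Ω) ∧
      (∀ t ∈ Ioo (-ε) ε, HasDerivWithinAt x (F (x t)) (Ioo (-ε) ε) t) ∧
      ∀ s t : ℝ, -ε < s → s ≤ t → t < ε → V (x s) ≤ V (x t) := by
  obtain ⟨ε₁, hε₁, y, hy0, hyΩ, hy, hymono⟩ := hf
  obtain ⟨ε₂, hε₂, z, hz0, hzΩ, hz, hzmono⟩ := hb.exists_backward
  set ε := min ε₁ ε₂
  have hε : 0 < ε := lt_min hε₁ hε₂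
  set x : ℝ → E := fun t => if 0 ≤ t then y t else z t
  have hxy : EqOn x y (Ici 0) := fun t ht => if_pos ht
  have hxz : EqOn x z (Iic 0) := fun t ht => by
    rcases (show t ≤ 0 from ht).lt_or_eq with ht | rfl
    · exact if_neg ht.not_ge
    · simp [x, hy0, hz0]
  have hy' : ∀ t ∈ Ico 0 ε, t ∈ Ico 0 ε₁ := fun t ht => ⟨ht.1, ht.2.trans_le (min_le_left _ _)⟩
  have hz' : ∀ t ∈ Ioc (-ε) 0, t ∈ Ioc (-ε₂) 0 := fun t ht =>
    ⟨by linarith [ht.1, min_le_right ε₁ ε₂], ht.2⟩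
  have hright : ∀ t < ε, HasDerivWithinAt x (F (x t)) (Ici 0) t := fun t ht => by
    by_cases h : 0 ≤ t
    · rw [hxy h]
      exact (hy t (hy' t ⟨h, ht⟩)).congr hxy (hxy h)
    · exact HasFDerivWithinAt.of_notMem_closure (by rwa [closure_Ici, mem_Ici])
  have hleft : ∀ t, -ε < t → HasDerivWithinAt x (F (x t)) (Iic 0) t := fun t ht => by
    by_cases h : t ≤ 0
    · rw [hxz h]
      exact (hz t (hz' t ⟨ht, h⟩)).congr hxz (hxz h)
    · exact HasFDerivWithinAt.of_notMem_closure (by rwa [closure_Iic, mem_Iic])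
  have hmono : MonotoneOn (V ∘ x) (Ioc (-ε) 0 ∪ Ico 0 ε) := by
    refine MonotoneOn.union_right (fun s hs t ht hst => ?_) (fun s hs t ht hst => ?_)
      (isGreatest_Ioc (by linarith)) (isLeast_Ico hε)
    · simpa [hxz hs.2, hxz ht.2] using hzmono (hz' s hs) (hz' t ht) hst
    · simpa [hxy hs.1, hxy ht.1] using hymono (hy' s hs) (hy' t ht) hst
  rw [Ioc_union_Ico_eq_Ioo (by linarith) hε] at hmono
  refine ⟨ε, hε, x, by simp [x, hy0], fun t ht => ?_, fun t ht => ?_,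
    fun s t hs hst ht => hmono ⟨hs, by linarith⟩ ⟨by linarith, ht⟩ hst⟩
  · rcases le_total 0 t with h | h
    · rw [hxy h]; exact hyΩ (hy' t ⟨h, ht.2⟩)
    · rw [hxz h]; exact hzΩ (hz' t ⟨ht.1, h⟩)
  · have := (hleft t ht.1).union (hright t ht.2)
    rw [Iic_union_Ici, hasDerivWithinAt_univ] at this
    exact this.hasDerivWithinAt

/-- An approximate solution of `ẋ = G x` on `[0, ε]` with error `θ`; the field
`norm_sub_sub_smul_le` says, in integrated form, that `g` is the derivative of `p`. -/
structure IsApproxTrajectory (G : E → E) (W : E → ℝ) (K : Set E) (x₀ : E) (ε θ : ℝ)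
    (p g : ℝ → E) : Prop where
  map_zero : p 0 = x₀
  mapsTo : MapsTo p (Icc 0 ε) K
  le_add : ∀ ⦃s t⦄, 0 ≤ s → s ≤ t → t ≤ ε → W (p s) ≤ W (p t) + θ
  exists_slope : ∀ u ∈ Icc 0 ε, ∃ y ∈ K, ‖y - p u‖ ≤ θ ∧ g u = G y
  norm_sub_sub_smul_le : ∀ ⦃s t c : ℝ⦄ ⦃z : E⦄, 0 ≤ s → s ≤ t →
    (∀ u ∈ Icc s t, ‖g u - z‖ ≤ c) → ‖p t - p s - (t - s) • z‖ ≤ c * (t - s)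

namespace IsApproxTrajectory

variable {G : E → E} {W : E → ℝ} {K : Set E} {x₀ : E} {ε θ : ℝ} {p g : ℝ → E}

theorem norm_sub_sub_smul_le_abs (hp : IsApproxTrajectory G W K x₀ ε θ p g) {s t c : ℝ} {z : E}
    (hs : 0 ≤ s) (ht : 0 ≤ t) (hz : ∀ u ∈ uIcc s t, ‖g u - z‖ ≤ c) :
    ‖p t - p s - (t - s) • z‖ ≤ c * |t - s| := by
  rcases le_total s t with hst | hts
  · rw [abs_of_nonneg (sub_nonneg.2 hst)]
    exact hp.norm_sub_sub_smul_le hs hst fun u hu => hz u (uIcc_of_le hst ▸ hu)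
  · rw [abs_sub_comm, abs_of_nonneg (sub_nonneg.2 hts), ← norm_neg,
      show -(p t - p s - (t - s) • z) = p s - p t - (s - t) • z by module]
    exact hp.norm_sub_sub_smul_le ht hts fun u hu => hz u (uIcc_of_ge hts ▸ hu)

theorem norm_sub_le (hp : IsApproxTrajectory G W K x₀ ε θ p g) {M : ℝ}
    (hGM : ∀ y ∈ K, ‖G y‖ ≤ M) {s t : ℝ} (hs : s ∈ Icc 0 ε) (ht : t ∈ Icc 0 ε) :
    ‖p t - p s‖ ≤ M * |t - s| := by
  have := hp.norm_sub_sub_smul_le_abs hs.1 ht.1 (z := (0 : E)) (c := M) fun u hu => by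
    obtain ⟨y, hyK, -, hgy⟩ := hp.exists_slope u
      ⟨le_min hs.1 ht.1 |>.trans hu.1, hu.2.trans (max_le hs.2 ht.2)⟩
    simpa [hgy] using hGM y hyK
  simpa using this

theorem norm_sub_sub_smul_le_of_dist_lt (hp : IsApproxTrajectory G W K x₀ ε θ p g) {M : ℝ}
    (hGM : ∀ y ∈ K, ‖G y‖ ≤ M) {s t c δ : ℝ} {y₀ z : E} (hs : s ∈ Icc 0 ε) (ht : t ∈ Icc 0 ε)
    (hz : ∀ y ∈ K, dist y y₀ < δ → ‖G y - z‖ ≤ c) (hδ : θ + M * |t - s| + dist (p s) y₀ < δ) :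
    ‖p t - p s - (t - s) • z‖ ≤ c * |t - s| := by
  refine hp.norm_sub_sub_smul_le_abs hs.1 ht.1 fun u hu => ?_
  have hu' : u ∈ Icc 0 ε := ⟨le_min hs.1 ht.1 |>.trans hu.1, hu.2.trans (max_le hs.2 ht.2)⟩
  obtain ⟨y, hyK, hy, hgy⟩ := hp.exists_slope u hu'
  rw [hgy]
  refine hz y hyK ?_
  have h1 := hp.norm_sub_le hGM hs hu'
  have h2 : M * |u - s| ≤ M * |t - s| :=
    mul_le_mul_of_nonneg_left (abs_sub_left_of_mem_uIcc hu) ((norm_nonneg _).trans (hGM y hyK))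
  refine (dist_triangle4 y (p u) (p s) y₀).trans_lt ?_
  rw [dist_eq_norm y, dist_eq_norm (p u)]
  linarith

end IsApproxTrajectory

section Limit

variable {G : E → E} {W : E → ℝ} {K : Set E} {x₀ : E} {ε : ℝ} {θ : ℕ → ℝ} {P g : ℕ → ℝ → E}
  {x : ℝ → E}

theorem monotoneOn_of_isApproxTrajectory (hW : ContinuousOn W K)
    (hP : ∀ j, IsApproxTrajectory G W K x₀ ε (θ j) (P j) (g j)) (hxK : MapsTo x (Icc 0 ε) K)
    (hx : ∀ s ∈ Icc 0 ε, ∀ t ∈ Icc 0 ε, ∀ η > 0,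
      ∃ j, θ j < η ∧ dist (P j s) (x s) < η ∧ dist (P j t) (x t) < η) :
    MonotoneOn (W ∘ x) (Icc 0 ε) := by
  intro s hs t ht hst
  refine le_of_forall_pos_le_add fun η hη => ?_
  obtain ⟨δ₁, hδ₁, h₁⟩ := continuousWithinAt_iff.1 (hW (x s) (hxK hs)) (η / 3) (by positivity)
  obtain ⟨δ₂, hδ₂, h₂⟩ := continuousWithinAt_iff.1 (hW (x t) (hxK ht)) (η / 3) (by positivity)
  obtain ⟨j, hθ, hjs, hjt⟩ := hx s hs t ht (min (min δ₁ δ₂) (η / 3)) (by positivity)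
  have e1 := h₁ ((hP j).mapsTo hs) (hjs.trans_le ((min_le_left _ _).trans (min_le_left _ _)))
  have e2 := h₂ ((hP j).mapsTo ht) (hjt.trans_le ((min_le_left _ _).trans (min_le_right _ _)))
  have e3 := (hP j).le_add hs.1 hst ht.2
  rw [Real.dist_eq, abs_lt] at e1 e2
  have := min_le_right (min δ₁ δ₂) (η / 3)
  simp only [Function.comp_apply]
  linarith [e1.1, e2.2]

theorem hasDerivWithinAt_of_isApproxTrajectory (hK : IsCompact K) (hG : ContinuousOn G K)
    {M : ℝ} (hM : 0 < M) (hGM : ∀ y ∈ K, ‖G y‖ ≤ M)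
    (hP : ∀ j, IsApproxTrajectory G W K x₀ ε (θ j) (P j) (g j)) (hxK : MapsTo x (Icc 0 ε) K)
    (hx : ∀ s ∈ Icc 0 ε, ∀ t ∈ Icc 0 ε, ∀ η > 0,
      ∃ j, θ j < η ∧ dist (P j s) (x s) < η ∧ dist (P j t) (x t) < η)
    {t : ℝ} (ht : t ∈ Ico 0 ε) : HasDerivWithinAt x (G (x t)) (Ici 0) t := by
  rw [hasDerivWithinAt_iff_isLittleO, Asymptotics.isLittleO_iff]
  intro c hc
  obtain ⟨δ, hδ, hGδ⟩ := uniformContinuousOn_iff_le.1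
    (hK.uniformContinuousOn_of_continuous hG) c hc
  have htI : t ∈ Icc 0 ε := Ico_subset_Icc_self ht
  have key : ∀ u ∈ Icc 0 ε, M * |u - t| < δ / 2 →
      ‖x u - x t - (u - t) • G (x t)‖ ≤ c * |u - t| := by
    intro u hu hut
    refine le_of_forall_pos_le_add fun η hη => ?_
    obtain ⟨j, hθ, hjt, hju⟩ := hx t htI u hu (min (η / 2) (δ / 4)) (by positivity)
    have := min_le_left (η / 2) (δ / 4)
    have := min_le_right (η / 2) (δ / 4)
    have h1 := (hP j).norm_sub_sub_smul_le_of_dist_lt hGM htI hu (c := c) (δ := δ)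
      (fun y hy hyt => by simpa [dist_eq_norm] using hGδ y hy (x t) (hxK htI) hyt.le)
      (by linarith)
    calc ‖x u - x t - (u - t) • G (x t)‖
        ≤ ‖P j u - P j t - (u - t) • G (x t)‖ + dist (P j u) (x u) + dist (P j t) (x t) := by
          rw [dist_eq_norm, dist_eq_norm,
            show x u - x t - (u - t) • G (x t) =
              (P j u - P j t - (u - t) • G (x t)) - (P j u - x u) + (P j t - x t) by abel]
          exact (norm_add_le _ _).trans (add_le_add (norm_sub_le _ _) le_rfl)
      _ ≤ c * |u - t| + η := by linarith
  filter_upwards [self_mem_nhdsWithin, nhdsWithin_le_nhds (Iio_mem_nhds ht.2),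
    nhdsWithin_le_nhds (ball_mem_nhds t (by positivity : 0 < δ / (2 * M)))]
    with u hu0 huε hut
  rw [Real.norm_eq_abs]
  refine key u ⟨hu0, huε.le⟩ ?_
  rw [mem_ball, Real.dist_eq, lt_div_iff₀ (by positivity)] at hut
  linarith

theorem exists_trajectory_of_isApproxTrajectory (hK : IsCompact K) (hG : ContinuousOn G K)
    (hW : ContinuousOn W K) {M : ℝ} (hM : 0 < M) (hGM : ∀ y ∈ K, ‖G y‖ ≤ M) (hε : 0 < ε)
    (hθ : Tendsto θ atTop (𝓝 0)) (hP : ∀ j, IsApproxTrajectory G W K x₀ ε (θ j) (P j) (g j)) :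
    ∃ x : ℝ → E, x 0 = x₀ ∧ MapsTo x (Icc 0 ε) K ∧
      (∀ t ∈ Ico 0 ε, HasDerivWithinAt x (G (x t)) (Ici 0) t) ∧ MonotoneOn (W ∘ x) (Icc 0 ε) := by
  obtain ⟨x, hxK, hx⟩ := exists_forall_frequently_dist_lt hK (l := atTop) fun j => (hP j).mapsTo
  have hx' : ∀ s ∈ Icc 0 ε, ∀ t ∈ Icc 0 ε, ∀ η > 0,
      ∃ j, θ j < η ∧ dist (P j s) (x s) < η ∧ dist (P j t) (x t) < η := fun s hs t ht η hη =>
    ((hx s hs t ht η hη).and_eventually (hθ.eventually_lt_const hη)).exists.imp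
      fun _ hj => ⟨hj.2, hj.1⟩
  refine ⟨x, eq_of_forall_dist_le fun η hη => ?_, hxK,
    fun t ht => hasDerivWithinAt_of_isApproxTrajectory hK hG hM hGM hP hxK hx' ht,
    monotoneOn_of_isApproxTrajectory hW hP hxK hx'⟩
  obtain ⟨j, -, hj, -⟩ := hx' 0 ⟨le_rfl, hε.le⟩ 0 ⟨le_rfl, hε.le⟩ η hη
  rw [(hP j).map_zero, dist_comm] at hj
  exact hj.le

end Limit

end NormedSpace

section InnerProductSpace

variable [InnerProductSpace ℝ E]

theorem isMaxOn_penalized_step {W : E → ℝ} {K : Set E} {a : ℝ} {x y w y' : E} (ha : 0 < a)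
    (hyK : y ∈ K) (hy' : IsMaxOn (fun z => W z - ‖z - (x + w)‖ ^ 2 / (2 * a)) K y')
    (hw : 0 ≤ ⟪y - x, w⟫) :
    W y - ‖y - x‖ ^ 2 / (2 * a) - ‖w‖ ^ 2 / (2 * a) ≤ W y' - ‖y' - (x + w)‖ ^ 2 / (2 * a) := by
  have hnorm : ‖y - (x + w)‖ ^ 2 ≤ ‖y - x‖ ^ 2 + ‖w‖ ^ 2 := by
    rw [← sub_sub, norm_sub_sq_real]
    linarith
  have h1 : W y - ‖y - (x + w)‖ ^ 2 / (2 * a) ≤ W y' - ‖y' - (x + w)‖ ^ 2 / (2 * a) := hy' hyK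
  have h2 : ‖y - (x + w)‖ ^ 2 / (2 * a) ≤ ‖y - x‖ ^ 2 / (2 * a) + ‖w‖ ^ 2 / (2 * a) := by
    rw [← add_div]
    gcongr
  linarith

/-- The left-hand side is the sup-convolution `sup_{y ∈ K} (W y - ‖y - x‖² / 2a)` at `x = X k`. -/
theorem penalized_le_add_of_euler_scheme {W : E → ℝ} {K : Set E} {G Y : E → E} {X : ℕ → E}
    {a h M : ℝ} {N : ℕ} (ha : 0 < a) (hh : 0 < h) (hYK : ∀ x, Y x ∈ K)
    (hYmax : ∀ x, IsMaxOn (fun z => W z - ‖z - x‖ ^ 2 / (2 * a)) K (Y x))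
    (hX : ∀ k, X (k + 1) = X k + h • G (Y (X k))) (hGM : ∀ k, ‖G (Y (X k))‖ ≤ M)
    (hinner : ∀ k < N, 0 ≤ ⟪G (Y (X k)), Y (X k) - X k⟫) {k l : ℕ} (hkl : k ≤ l) (hl : l ≤ N) :
    W (Y (X k)) - ‖Y (X k) - X k‖ ^ 2 / (2 * a) ≤
      W (Y (X l)) - ‖Y (X l) - X l‖ ^ 2 / (2 * a) + l * ((h * M) ^ 2 / (2 * a)) := by
  refine le_add_mul_of_forall_sub_le_succ
    (f := fun k => W (Y (X k)) - ‖Y (X k) - X k‖ ^ 2 / (2 * a)) (by positivity)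
    (fun k hk => ?_) hkl hl
  have hstep : 0 ≤ ⟪Y (X k) - X k, h • G (Y (X k))⟫ := by
    rw [inner_smul_right, real_inner_comm]
    exact mul_nonneg hh.le (hinner k hk)
  have h1 := isMaxOn_penalized_step ha (hYK (X k)) (hX k ▸ hYmax (X (k + 1))) hstep
  have h2 : ‖h • G (Y (X k))‖ ^ 2 / (2 * a) ≤ (h * M) ^ 2 / (2 * a) := by
    rw [norm_smul, Real.norm_of_nonneg hh.le]
    gcongr
    exact hGM k
  simp only [hX k]
  linarith

theorem isApproxTrajectory_eulerPolygon {G Y : E → E} {W : E → ℝ} {K : Set E} {X : ℕ → E}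
    {x₀ : E} {r ε M a d δ θ h : ℝ} (hε : 0 ≤ ε) (hh : 0 < h) (ha : 0 < a)
    (hrK : closedBall x₀ r ⊆ K)
    (hYK : ∀ x, Y x ∈ K) (hYmax : ∀ x, IsMaxOn (fun z => W z - ‖z - x‖ ^ 2 / (2 * a)) K (Y x))
    (hY : ∀ x ∈ closedBall x₀ r, ‖Y x - x‖ ≤ d ∧ 0 ≤ ⟪G (Y x), Y x - x⟫)
    (hGM : ∀ y ∈ K, ‖G y‖ ≤ M) (hWδ : ∀ x ∈ K, ∀ y ∈ K, dist x y < δ → W x < W y + θ / 4)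
    (hX0 : X 0 = x₀) (hX : ∀ k, X (k + 1) = X k + h • G (Y (X k))) (hεM : M * ε ≤ r)
    (hdδ : d < δ) (hhM : h * M ≤ d) (hdθ : 2 * d ≤ θ)
    (hNθ : ⌊ε / h⌋₊ * ((h * M) ^ 2 / (2 * a)) ≤ θ / 4) :
    IsApproxTrajectory G W K x₀ ε θ (eulerPolygon h X fun k => G (Y (X k)))
      fun u => G (Y (X ⌊u / h⌋₊)) := by
  have hvM : ∀ k, ‖G (Y (X k))‖ ≤ M := fun k => hGM _ (hYK _)
  set p := eulerPolygon h X fun k => G (Y (X k))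
  have hpX : ∀ t, 0 ≤ t → ‖p t - X ⌊t / h⌋₊‖ ≤ h * M := fun t ht =>
    norm_eulerPolygon_sub_floor_le hh hX hvM ht
  have hpr : ∀ t ∈ Icc 0 ε, p t ∈ closedBall x₀ r := fun t ht => by
    have := norm_eulerPolygon_sub_zero_le hh hX hvM ht.1
    rw [mem_closedBall, dist_eq_norm, ← hX0]
    nlinarith [ht.2, (norm_nonneg _).trans (hvM 0)]
  set N := ⌊ε / h⌋₊
  have hfloor : ∀ ⦃t⦄, t ≤ ε → ⌊t / h⌋₊ ≤ N := fun t ht => Nat.floor_le_floor (by gcongr)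
  have hXr : ∀ k ≤ N, X k ∈ closedBall x₀ r := fun k hk => by
    have : p (k * h) = X k := eulerPolygon_natCast_mul hh k
    refine this ▸ hpr _ ⟨by positivity, ?_⟩
    calc (k : ℝ) * h ≤ N * h := by gcongr
      _ ≤ ε := (le_div_iff₀ hh).1 (Nat.floor_le (by positivity))
  refine ⟨by simpa [hX0] using eulerPolygon_natCast_mul hh (X := X) 0,
    fun t ht => hrK (hpr t ht), fun s t hs hst ht => ?_,
    fun u hu => ⟨Y (X ⌊u / h⌋₊), hYK _, ?_, rfl⟩,
    fun _ _ _ _ hs hst hv => norm_eulerPolygon_sub_sub_smul_le hh hX hs hst hv⟩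
  · -- `W (p s) ≈ W (X ks) ≤ Wa ks ≤ Wa kt + θ / 4 ≤ W (Y (X kt)) ≈ W (X kt) ≈ W (p t)`, where
    -- `Wa` is the sup-convolution along the scheme and each `≈` costs `θ / 4`
    have hks : ⌊s / h⌋₊ ≤ ⌊t / h⌋₊ := Nat.floor_le_floor (by gcongr)
    have hXs := hXr _ (hks.trans (hfloor ht))
    have hXt := hXr _ (hfloor ht)
    have h1 := hWδ _ (hrK (hpr s ⟨hs, hst.trans ht⟩)) _ (hrK hXs)
      (by rw [dist_eq_norm]; linarith [hpX s hs])
    have h2 : W (X ⌊s / h⌋₊) ≤ W (Y (X ⌊s / h⌋₊)) - ‖Y (X ⌊s / h⌋₊) - X ⌊s / h⌋₊‖ ^ 2 / (2 * a) :=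
      by simpa using hYmax (X ⌊s / h⌋₊) (hrK hXs)
    have h3 := penalized_le_add_of_euler_scheme ha hh hYK hYmax hX hvM
      (fun k hk => (hY _ (hXr k hk.le)).2) hks (hfloor ht)
    have h4 : (⌊t / h⌋₊ : ℝ) * ((h * M) ^ 2 / (2 * a)) ≤ θ / 4 :=
      le_trans (by gcongr; exact hfloor ht) hNθ
    have h5 : 0 ≤ ‖Y (X ⌊t / h⌋₊) - X ⌊t / h⌋₊‖ ^ 2 / (2 * a) := by positivity
    have h6 := hWδ _ (hYK _) _ (hrK hXt) (by rw [dist_eq_norm]; exact (hY _ hXt).1.trans_lt hdδ)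
    have h7 := hWδ _ (hrK hXt) _ (hrK (hpr t ⟨hs.trans hst, ht⟩))
      (by rw [dist_eq_norm']; linarith [hpX t (hs.trans hst)])
    linarith
  · calc ‖Y (X ⌊u / h⌋₊) - p u‖ ≤ ‖Y (X ⌊u / h⌋₊) - X ⌊u / h⌋₊‖ + ‖p u - X ⌊u / h⌋₊‖ := by
          rw [norm_sub_rev (p u)]; exact norm_sub_le_norm_sub_add_norm_sub _ _ _
      _ ≤ d + h * M := add_le_add (hY _ (hXr _ (hfloor hu.2))).1 (hpX u hu.1)
      _ ≤ θ := by linarith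

section Viscosity

variable [CompleteSpace E]

/-- `V` is a viscosity subsolution of `-⟪F, ∇V⟫ ≤ 0` in `Ω`. -/
def IsViscositySubsolution (Ω : Set E) (F : E → E) (V : E → ℝ) : Prop :=
  ∀ φ : E → ℝ, ContDiff ℝ 1 φ → ∀ x₀ ∈ Ω,
    IsLocalMaxOn (fun x => V x - φ x) Ω x₀ → 0 ≤ ⟪F x₀, gradient φ x₀⟫

theorem gradient_neg (φ : E → ℝ) (x : E) : gradient (-φ) x = -gradient φ x := by
  simp [gradient, fderiv_neg]

theorem isViscositySubsolution_neg_iff {Ω : Set E} {F : E → E} {V : E → ℝ} :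
    IsViscositySubsolution Ω (-F) (-V) ↔ ∀ φ : E → ℝ, ContDiff ℝ 1 φ → ∀ x₀ ∈ Ω,
      IsLocalMinOn (fun x => V x - φ x) Ω x₀ → 0 ≤ ⟪F x₀, gradient φ x₀⟫ := by
  constructor
  · intro h φ hφ x₀ hx₀ hmin
    simpa [gradient_neg] using h (-φ) hφ.neg x₀ hx₀ (by simpa [neg_add_eq_sub] using hmin.neg)
  · intro h φ hφ x₀ hx₀ hmax
    simpa [gradient_neg] using h (-φ) hφ.neg x₀ hx₀ (by simpa [add_comm] using hmax.neg)

theorem HasMonotoneForwardTrajectory.inner_gradient_nonneg {Ω : Set E} {F : E → E} {V : E → ℝ}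
    {x₀ : E} (h : HasMonotoneForwardTrajectory Ω F V x₀) {φ : E → ℝ}
    (hφ : DifferentiableAt ℝ φ x₀) (hmax : IsLocalMaxOn (fun x => V x - φ x) Ω x₀) :
    0 ≤ ⟪F x₀, gradient φ x₀⟫ := by
  obtain ⟨ε, hε, x, rfl, hxΩ, hx, hmono⟩ := h
  have h0 : (0 : ℝ) ∈ Ico 0 ε := ⟨le_rfl, hε⟩
  have hcomp : HasDerivWithinAt (φ ∘ x) (fderiv ℝ φ (x 0) (F (x 0))) (Ici 0) 0 :=
    hφ.hasFDerivAt.comp_hasDerivWithinAt 0 (hx 0 h0)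
  have hmin : IsLocalMinOn (φ ∘ x) (Ici 0) 0 := by
    have hxΩ' : Tendsto x (𝓝[Ici 0] 0) (𝓝[Ω] (x 0)) :=
      tendsto_nhdsWithin_iff.2 ⟨(hx 0 h0).continuousWithinAt,
        mem_of_superset (Ico_mem_nhdsGE hε) hxΩ⟩
    filter_upwards [hxΩ'.eventually hmax, Ico_mem_nhdsGE hε] with t hmaxt ht
    have := hmono h0 ht ht.1
    simp only [Function.comp_apply] at this ⊢
    linarith
  have := hmin.hasFDerivWithinAt_nonneg hcomp.hasFDerivWithinAt (y := 1)
    (mem_posTangentConeAt_of_segment_subset (by simp [segment_eq_Icc, Icc_subset_Ici_self]))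
  rw [real_inner_comm, inner_gradient_left]
  simpa using this

theorem isViscositySubsolution_of_hasMonotoneForwardTrajectory {Ω : Set E} {F : E → E}
    {V : E → ℝ} (h : ∀ x₀ ∈ Ω, HasMonotoneForwardTrajectory Ω F V x₀) :
    IsViscositySubsolution Ω F V := fun _ hφ x₀ hx₀ hmax =>
  (h x₀ hx₀).inner_gradient_nonneg (hφ.differentiable one_ne_zero x₀) hmax

theorem inner_nonneg_of_isMaxOn_penalized {Ω : Set E} {G : E → E} {W : E → ℝ} {K : Set E}
    {a : ℝ} {x y : E} (hsub : IsViscositySubsolution Ω G W) (ha : 0 < a)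
    (hy : IsMaxOn (fun z => W z - ‖z - x‖ ^ 2 / (2 * a)) K y) (hyΩ : y ∈ Ω) (hK : K ∈ 𝓝 y) :
    0 ≤ ⟪G y, y - x⟫ := by
  have hφ : ContDiff ℝ 1 fun z : E => ‖z - x‖ ^ 2 / (2 * a) :=
    ((contDiff_norm_sq ℝ).comp (contDiff_id.sub contDiff_const)).div_const _
  have hderiv := (((hasFDerivAt_id y).sub_const x).norm_sq).mul_const (2 * a)⁻¹
  simp only [id, ← div_eq_mul_inv] at hderiv
  have := hsub _ hφ y hyΩ ((hy.isLocalMax hK).on Ω)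
  rw [real_inner_comm, inner_gradient_left, hderiv.fderiv] at this
  simp only [smul_apply, ContinuousLinearMap.comp_apply, innerSL_apply_apply,
    ContinuousLinearMap.id_apply, smul_eq_mul, nsmul_eq_mul, Nat.cast_ofNat] at this
  have := nonneg_of_mul_nonneg_right this (by positivity : (0 : ℝ) < (2 * a)⁻¹)
  rw [real_inner_comm]
  linarith

end Viscosity

theorem exists_penalized_maximizer [ProperSpace E] {Ω : Set E} {G : E → E} {W : E → ℝ}
    (hsub : IsViscositySubsolution Ω G W) {x₀ : E} {r B d : ℝ} (hd : 0 < d) (hdr : d < r)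
    (hΩ : closedBall x₀ (2 * r) ⊆ Ω) (hW : ContinuousOn W (closedBall x₀ (2 * r)))
    (hWB : ∀ y ∈ closedBall x₀ (2 * r), |W y| ≤ B) :
    ∃ a > 0, ∃ Y : E → E, (∀ x, Y x ∈ closedBall x₀ (2 * r)) ∧
      (∀ x, IsMaxOn (fun z => W z - ‖z - x‖ ^ 2 / (2 * a)) (closedBall x₀ (2 * r)) (Y x)) ∧
      ∀ x ∈ closedBall x₀ r, ‖Y x - x‖ ≤ d ∧ 0 ≤ ⟪G (Y x), Y x - x⟫ := by
  have hx₀ : x₀ ∈ closedBall x₀ (2 * r) := mem_closedBall_self (by linarith)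
  have hB : 0 ≤ B := (abs_nonneg _).trans (hWB x₀ hx₀)
  obtain ⟨a, ha, haB⟩ : ∃ a > 0, 4 * a * B ≤ d ^ 2 := by
    refine ⟨d ^ 2 / (4 * B + 1), by positivity, ?_⟩
    rw [show 4 * (d ^ 2 / (4 * B + 1)) * B = d ^ 2 * (4 * B / (4 * B + 1)) by ring]
    exact mul_le_of_le_one_right (by positivity) ((div_le_one (by positivity)).2 (by linarith))
  choose Y hYK hYmax using fun x : E => (isCompact_closedBall x₀ (2 * r)).exists_isMaxOn ⟨x₀, hx₀⟩
    (hW.sub (by fun_prop) : ContinuousOn (fun z => W z - ‖z - x‖ ^ 2 / (2 * a)) _)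
  refine ⟨a, ha, Y, hYK, hYmax, fun x hx => ?_⟩
  have hgap : ‖Y x - x‖ ≤ d := by
    have := norm_sub_sq_le_of_isMaxOn_penalized ha (hYmax x)
      (closedBall_subset_closedBall (by linarith) hx) (hYK x) hWB
    exact (pow_le_pow_iff_left₀ (norm_nonneg _) hd.le two_ne_zero).1 (this.trans haB)
  have hY : Y x ∈ ball x₀ (2 * r) := by
    have : dist (Y x) x ≤ d := by rw [dist_eq_norm]; exact hgap
    rw [mem_ball]
    linarith [dist_triangle (Y x) x x₀, mem_closedBall.1 hx]
  exact ⟨hgap, inner_nonneg_of_isMaxOn_penalized hsub ha (hYmax x) (hΩ (hYK x))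
    (closedBall_mem_nhds_of_mem hY)⟩

theorem exists_isApproxTrajectory [ProperSpace E] {Ω : Set E} {G : E → E} {W : E → ℝ}
    (hsub : IsViscositySubsolution Ω G W) {x₀ : E} {r M B θ : ℝ} (hr : 0 < r) (hM : 0 < M)
    (hθ : 0 < θ) (hΩ : closedBall x₀ (2 * r) ⊆ Ω) (hW : ContinuousOn W (closedBall x₀ (2 * r)))
    (hGM : ∀ y ∈ closedBall x₀ (2 * r), ‖G y‖ ≤ M)
    (hWB : ∀ y ∈ closedBall x₀ (2 * r), |W y| ≤ B) :
    ∃ p g, IsApproxTrajectory G W (closedBall x₀ (2 * r)) x₀ (r / M) θ p g := by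
  obtain ⟨δ, hδ, hWδ⟩ := uniformContinuousOn_iff.1
    ((isCompact_closedBall _ _).uniformContinuousOn_of_continuous hW) (θ / 4) (by positivity)
  obtain ⟨d, hd, hdlt⟩ := exists_between (lt_min (lt_min hδ (half_pos hθ)) hr)
  simp only [lt_min_iff] at hdlt
  obtain ⟨a, ha, Y, hYK, hYmax, hY⟩ := exists_penalized_maximizer hsub hd hdlt.2 hΩ hW hWB
  obtain ⟨h, hh, hhM, hhθ⟩ : ∃ h > 0, h * M ≤ d ∧ r / M * h * M ^ 2 / (2 * a) ≤ θ / 4 := by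
    refine ⟨min (d / M) (θ * a / (2 * r * M)), by positivity, ?_, ?_⟩
    · rw [← le_div_iff₀ hM]
      exact min_le_left _ _
    · calc r / M * min (d / M) (θ * a / (2 * r * M)) * M ^ 2 / (2 * a)
          ≤ r / M * (θ * a / (2 * r * M)) * M ^ 2 / (2 * a) := by gcongr; exact min_le_right _ _
        _ = θ / 4 := by field_simp; norm_num
  obtain ⟨X, hX0, hX⟩ : ∃ X : ℕ → E, X 0 = x₀ ∧ ∀ k, X (k + 1) = X k + h • G (Y (X k)) :=
    ⟨fun k => Nat.rec x₀ (fun _ xk => xk + h • G (Y xk)) k, rfl, fun _ => rfl⟩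
  refine ⟨_, _, isApproxTrajectory_eulerPolygon (by positivity) hh ha
    (closedBall_subset_closedBall (by linarith)) hYK hYmax hY hGM
    (fun x hx y hy hxy => ?_) hX0 hX (mul_div_cancel₀ r hM.ne').le hdlt.1.1 hhM (by linarith) ?_⟩
  · have := hWδ x hx y hy hxy
    rw [Real.dist_eq] at this
    linarith [le_abs_self (W x - W y)]
  · calc ⌊r / M / h⌋₊ * ((h * M) ^ 2 / (2 * a)) ≤ r / M / h * ((h * M) ^ 2 / (2 * a)) := by
          gcongr; exact Nat.floor_le (by positivity)
      _ = r / M * h * M ^ 2 / (2 * a) := by field_simp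
      _ ≤ θ / 4 := hhθ

theorem IsViscositySubsolution.hasMonotoneForwardTrajectory [ProperSpace E] {Ω : Set E}
    {G : E → E} {W : E → ℝ} (hsub : IsViscositySubsolution Ω G W) (hΩ : IsOpen Ω)
    (hG : ContinuousOn G Ω) (hW : ContinuousOn W Ω) {x₀ : E} (hx₀ : x₀ ∈ Ω) :
    HasMonotoneForwardTrajectory Ω G W x₀ := by
  obtain ⟨ρ, hρ, hball⟩ := isOpen_iff.1 hΩ x₀ hx₀
  have hr : 0 < ρ / 3 := by positivity
  have hKΩ : closedBall x₀ (2 * (ρ / 3)) ⊆ Ω := (closedBall_subset_ball (by linarith)).trans hball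
  have hK := isCompact_closedBall x₀ (2 * (ρ / 3))
  obtain ⟨M, hM⟩ := hK.exists_bound_of_continuousOn (hG.mono hKΩ)
  obtain ⟨B, hB⟩ := hK.exists_bound_of_continuousOn (hW.mono hKΩ)
  have hGM : ∀ y ∈ closedBall x₀ (2 * (ρ / 3)), ‖G y‖ ≤ max M 1 := fun y hy =>
    (hM y hy).trans (le_max_left _ _)
  have hM₁ : 0 < max M 1 := lt_max_of_lt_right one_pos
  choose P g hP using fun j : ℕ => exists_isApproxTrajectory hsub hr hM₁ (θ := 1 / (j + 1))
    (by positivity) hKΩ (hW.mono hKΩ) hGM fun y hy => by simpa using hB y hy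
  obtain ⟨x, hx0, hxK, hderiv, hmono⟩ := exists_trajectory_of_isApproxTrajectory hK
    (hG.mono hKΩ) (hW.mono hKΩ) hM₁ hGM (by positivity) tendsto_one_div_add_atTop_nhds_zero_nat hP
  exact ⟨_, by positivity, x, hx0, (hxK.mono_left Ico_subset_Icc_self).mono_right hKΩ, hderiv,
    hmono.mono Ico_subset_Icc_self⟩

theorem isViscositySubsolution_iff_forall_hasMonotoneForwardTrajectory [ProperSpace E]
    {Ω : Set E} {G : E → E} {W : E → ℝ} (hΩ : IsOpen Ω) (hG : ContinuousOn G Ω)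
    (hW : ContinuousOn W Ω) :
    IsViscositySubsolution Ω G W ↔ ∀ x₀ ∈ Ω, HasMonotoneForwardTrajectory Ω G W x₀ :=
  ⟨fun h _ hx₀ => h.hasMonotoneForwardTrajectory hΩ hG hW hx₀,
    isViscositySubsolution_of_hasMonotoneForwardTrajectory⟩

end InnerProductSpace

theorem stmt_2 {n : ℕ} (Ω : Set (EuclideanSpace ℝ (Fin n))) (hΩ : IsOpen Ω)
    (F : EuclideanSpace ℝ (Fin n) → EuclideanSpace ℝ (Fin n)) (hF : ContinuousOn F Ω)
    (V : EuclideanSpace ℝ (Fin n) → ℝ) (hV : ContinuousOn V Ω) :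
    ((∀ φ : EuclideanSpace ℝ (Fin n) → ℝ, ContDiff ℝ 1 φ → ∀ x₀ ∈ Ω,
        IsLocalMaxOn (fun x => V x - φ x) Ω x₀ → -⟪F x₀, gradient φ x₀⟫ ≤ 0) ∧
     (∀ φ : EuclideanSpace ℝ (Fin n) → ℝ, ContDiff ℝ 1 φ → ∀ x₀ ∈ Ω,
        IsLocalMinOn (fun x => V x - φ x) Ω x₀ → 0 ≤ ⟪F x₀, gradient φ x₀⟫))
    ↔
    (∀ x₀ ∈ Ω, ∃ ε > (0:ℝ), ∃ x : ℝ → EuclideanSpace ℝ (Fin n),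
        x 0 = x₀ ∧ (∀ t ∈ Ioo (-ε) ε, x t ∈ Ω) ∧
        (∀ t ∈ Ioo (-ε) ε, HasDerivWithinAt x (F (x t)) (Ioo (-ε) ε) t) ∧
        ∀ s t : ℝ, -ε < s → s ≤ t → t < ε → V (x s) ≤ V (x t)) := by
  simp only [neg_nonpos]
  change IsViscositySubsolution Ω F V ∧ _ ↔ _
  rw [← isViscositySubsolution_neg_iff,
    isViscositySubsolution_iff_forall_hasMonotoneForwardTrajectory hΩ hF hV,
    isViscositySubsolution_iff_forall_hasMonotoneForwardTrajectory hΩ hF.neg hV.neg, ← forall₂_and]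
  exact forall₂_congr fun _ _ => ⟨fun h => exists_monotone_trajectory_of_forward_backward h.1 h.2,
    hasMonotoneForwardTrajectory_of_exists⟩
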